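/- Let T be a bounded linear operator on a complex Hilbert space H. Then w(T)³ ≤ (1/2) w(T T* T) + (1/4) ‖T*T + TT*‖ ‖T‖. -/
import Mathlib


open scoped InnerProductSpace

variable {H : Type*} [NormedAddCommGroup H] [InnerProductSpace ℂ H] [CompleteSpace H]

/-- The numerical radius of a bounded linear operator. -/
noncomputable def numRadius (T : H →L[ℂ] H) : ℝ :=
  sSup {r : ℝ | ∃ x : H, ‖x‖ = 1 ∧ r = ‖⟪T x, x⟫_ℂ‖}

/-- Buzano's inequality. -/
lemma buzano (u v e : H) (he : ‖e‖ = 1) :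
    ‖⟪u, e⟫_ℂ * ⟪e, v⟫_ℂ‖ ≤ (‖u‖ * ‖v‖ + ‖⟪u, v⟫_ℂ‖) / 2 := by
  set w : H := ((2 : ℂ) * ⟪e, v⟫_ℂ) • e - v with hw
  have hwnorm : ‖w‖ = ‖v‖ := by
    have h2 : ‖w‖ ^ 2 = ‖v‖ ^ 2 := by
      have hns := @norm_sub_sq ℂ H _ _ _ (((2 : ℂ) * ⟪e, v⟫_ℂ) • e) v
      have h22 : (starRingEnd ℂ) (2:ℂ) = 2 := by norm_num [Complex.ext_iff]
      rw [hw, hns, norm_smul, inner_smul_left, he, mul_one, map_mul (starRingEnd ℂ) (2:ℂ) ⟪e, v⟫_ℂ, mul_assoc, h22]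
      have hre : RCLike.re ((2:ℂ) * ((starRingEnd ℂ) ⟪e, v⟫_ℂ * ⟪e, v⟫_ℂ))
          = 2 * ‖⟪e, v⟫_ℂ‖ ^ 2 := by
        rw [RCLike.conj_mul]; simp [← Complex.ofReal_pow]
      rw [hre]
      have hn : ‖(2:ℂ) * ⟪e, v⟫_ℂ‖ = 2 * ‖⟪e, v⟫_ℂ‖ := by
        rw [norm_mul]; norm_num
      rw [hn]
      ring
    have h1 : (0:ℝ) ≤ ‖w‖ := norm_nonneg _
    have h2' : (0:ℝ) ≤ ‖v‖ := norm_nonneg _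
    nlinarith
  have hiw : ⟪u, w⟫_ℂ = (2 : ℂ) * (⟪u, e⟫_ℂ * ⟪e, v⟫_ℂ) - ⟪u, v⟫_ℂ := by
    rw [hw, inner_sub_right, inner_smul_right]; ring
  have hcs : ‖⟪u, w⟫_ℂ‖ ≤ ‖u‖ * ‖v‖ := by
    calc ‖⟪u, w⟫_ℂ‖ ≤ ‖u‖ * ‖w‖ := norm_inner_le_norm u w
    _ = ‖u‖ * ‖v‖ := by rw [hwnorm]
  have key : (2:ℝ) * ‖⟪u, e⟫_ℂ * ⟪e, v⟫_ℂ‖ ≤ ‖u‖ * ‖v‖ + ‖⟪u, v⟫_ℂ‖ := by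
    have : (2 : ℂ) * (⟪u, e⟫_ℂ * ⟪e, v⟫_ℂ) = ⟪u, w⟫_ℂ + ⟪u, v⟫_ℂ := by
      rw [hiw]; ring
    calc (2:ℝ) * ‖⟪u, e⟫_ℂ * ⟪e, v⟫_ℂ‖ = ‖(2:ℂ) * (⟪u, e⟫_ℂ * ⟪e, v⟫_ℂ)‖ := by
          rw [norm_mul]; norm_num
    _ = ‖⟪u, w⟫_ℂ + ⟪u, v⟫_ℂ‖ := by rw [this]
    _ ≤ ‖⟪u, w⟫_ℂ‖ + ‖⟪u, v⟫_ℂ‖ := norm_add_le _ _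
    _ ≤ ‖u‖ * ‖v‖ + ‖⟪u, v⟫_ℂ‖ := by linarith
  linarith

lemma numRadius_bddAbove (T : H →L[ℂ] H) :
    ∀ r ∈ {r : ℝ | ∃ x : H, ‖x‖ = 1 ∧ r = ‖⟪T x, x⟫_ℂ‖}, r ≤ ‖T‖ := by
  rintro r ⟨x, hx, rfl⟩
  calc ‖⟪T x, x⟫_ℂ‖ ≤ ‖T x‖ * ‖x‖ := norm_inner_le_norm _ _
  _ ≤ ‖T‖ * ‖x‖ * ‖x‖ := by
      have := T.le_opNorm x
      nlinarith [norm_nonneg x]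
  _ = ‖T‖ := by rw [hx]; ring

lemma le_numRadius (T : H →L[ℂ] H) (x : H) (hx : ‖x‖ = 1) :
    ‖⟪T x, x⟫_ℂ‖ ≤ numRadius T := by
  apply le_csSup
  · exact ⟨‖T‖, fun r hr => numRadius_bddAbove T r hr⟩
  · exact ⟨x, hx, rfl⟩

lemma numRadius_nonneg (T : H →L[ℂ] H) : 0 ≤ numRadius T := by
  rcases Set.eq_empty_or_nonempty {r : ℝ | ∃ x : H, ‖x‖ = 1 ∧ r = ‖⟪T x, x⟫_ℂ‖} with h | h
  · rw [numRadius, h, Real.sSup_empty]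
  · obtain ⟨r, hr⟩ := h
    obtain ⟨x, hx, rfl⟩ := hr
    exact le_trans (norm_nonneg _) (le_numRadius T x hx)

theorem thm2 (T : H →L[ℂ] H) :
    (numRadius T) ^ 3 ≤ (1 / 2) * numRadius (T * ContinuousLinearMap.adjoint T * T) +
      (1 / 4) * ‖ContinuousLinearMap.adjoint T * T + T * ContinuousLinearMap.adjoint T‖ * ‖T‖ := by
  set S := ContinuousLinearMap.adjoint T with hS
  set C : ℝ := (1 / 2) * numRadius (T * S * T) + (1 / 4) * ‖S * T + T * S‖ * ‖T‖ with hC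
  have hC0 : 0 ≤ C := by
    have h1 := numRadius_nonneg (T * S * T)
    have h2 : (0:ℝ) ≤ ‖S * T + T * S‖ * ‖T‖ :=
      mul_nonneg (norm_nonneg _) (norm_nonneg _)
    positivity
  -- key pointwise bound
  have key : ∀ x : H, ‖x‖ = 1 → ‖⟪T x, x⟫_ℂ‖ ^ 3 ≤ C := by
    intro x hx
    set a : ℝ := ‖⟪T x, x⟫_ℂ‖ with ha
    have ha0 : 0 ≤ a := norm_nonneg _
    have haTx : a ≤ ‖T x‖ := by
      calc a ≤ ‖T x‖ * ‖x‖ := norm_inner_le_norm _ _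
      _ = ‖T x‖ := by rw [hx, mul_one]
    -- Buzano with u = (S ∘ T) x = T*(Tx), v = S x = T* x, e = x
    have hbuz := buzano (S (T x)) (S x) x hx
    -- ⟪S (T x), x⟫ = ⟪T x, T x⟫ = ‖T x‖²
    have h1 : ⟪S (T x), x⟫_ℂ = (‖T x‖ : ℂ) ^ 2 := by
      rw [hS, ContinuousLinearMap.adjoint_inner_left, inner_self_eq_norm_sq_to_K]
      norm_cast
    -- ⟪x, S x⟫ = ⟪T x, x⟫
    have h2 : ⟪x, S x⟫_ℂ = ⟪T x, x⟫_ℂ := by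
      rw [hS, ContinuousLinearMap.adjoint_inner_right]
    -- ⟪S (T x), S x⟫ = ⟪(T * S * T) x, x⟫
    have h3 : ⟪S (T x), S x⟫_ℂ = ⟪(T * S * T) x, x⟫_ℂ := by
      rw [hS]
      rw [ContinuousLinearMap.adjoint_inner_right]
      rfl
    rw [h1, h2, h3] at hbuz
    have hlhs : ‖((‖T x‖ : ℂ) ^ 2) * ⟪T x, x⟫_ℂ‖ = ‖T x‖ ^ 2 * a := by
      rw [norm_mul, ha]
      congr 1
      rw [norm_pow]
      simp
    rw [hlhs] at hbuz
    -- bound ‖S (T x)‖ ≤ ‖T‖ * ‖T x‖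
    have hSnorm : ‖S‖ = ‖T‖ := by
      rw [hS]
      exact (ContinuousLinearMap.adjoint : (H →L[ℂ] H) ≃ₗᵢ⋆[ℂ] (H →L[ℂ] H)).norm_map T
    have hSTx : ‖S (T x)‖ ≤ ‖T‖ * ‖T x‖ := by
      calc ‖S (T x)‖ ≤ ‖S‖ * ‖T x‖ := S.le_opNorm _
      _ = ‖T‖ * ‖T x‖ := by rw [hSnorm]
    -- AM-GM on ‖T x‖ * ‖S x‖ via the operator S*T + T*S
    have hAM : ‖T x‖ * ‖S x‖ ≤ (1/2) * ‖S * T + T * S‖ := by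
      have hsum : ‖T x‖ ^ 2 + ‖S x‖ ^ 2 = ‖⟪(S * T + T * S) x, x⟫_ℂ‖ := by
        have e1 : ⟪(S * T + T * S) x, x⟫_ℂ = ⟪S (T x), x⟫_ℂ + ⟪T (S x), x⟫_ℂ := by
          rw [show (S * T + T * S) x = S (T x) + T (S x) from rfl, inner_add_left]
        have e2 : ⟪T (S x), x⟫_ℂ = (‖S x‖ : ℂ) ^ 2 := by
          have : ⟪T (S x), x⟫_ℂ = ⟪S x, S x⟫_ℂ := by
            rw [← ContinuousLinearMap.adjoint_inner_right, ← hS]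
          rw [this, inner_self_eq_norm_sq_to_K]
          norm_cast
        rw [e1, h1, e2]
        rw [show ((‖T x‖:ℂ))^2 + ((‖S x‖:ℂ))^2 = (((‖T x‖^2 + ‖S x‖^2 : ℝ)) : ℂ) by
          push_cast; ring]
        rw [Complex.norm_real, Real.norm_of_nonneg (by positivity)]
      have hb : ‖⟪(S * T + T * S) x, x⟫_ℂ‖ ≤ ‖S * T + T * S‖ := by
        calc ‖⟪(S * T + T * S) x, x⟫_ℂ‖ ≤ ‖(S * T + T * S) x‖ * ‖x‖ :=
              norm_inner_le_norm _ _
        _ ≤ ‖S * T + T * S‖ * ‖x‖ * ‖x‖ := by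
              have := (S * T + T * S).le_opNorm x
              nlinarith [norm_nonneg x]
        _ = ‖S * T + T * S‖ := by rw [hx]; ring
      nlinarith [sq_nonneg (‖T x‖ - ‖S x‖)]
    have hw : ‖⟪(T * S * T) x, x⟫_ℂ‖ ≤ numRadius (T * S * T) :=
      le_numRadius _ x hx
    have hTx0 : (0:ℝ) ≤ ‖T x‖ := norm_nonneg _
    have hSx0 : (0:ℝ) ≤ ‖S x‖ := norm_nonneg _
    have hT0 : (0:ℝ) ≤ ‖T‖ := norm_nonneg _
    -- combine
    have step1 : a ^ 3 ≤ ‖T x‖ ^ 2 * a := by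
      have hsq : a ^ 2 ≤ ‖T x‖ ^ 2 := by nlinarith
      calc a ^ 3 = a ^ 2 * a := by ring
      _ ≤ ‖T x‖ ^ 2 * a := mul_le_mul_of_nonneg_right hsq ha0
    have step2 : ‖T x‖ ^ 2 * a ≤ (‖T‖ * ‖T x‖ * ‖S x‖ + ‖⟪(T * S * T) x, x⟫_ℂ‖) / 2 := by
      calc ‖T x‖ ^ 2 * a ≤ (‖S (T x)‖ * ‖S x‖ + ‖⟪(T * S * T) x, x⟫_ℂ‖) / 2 := hbuz
      _ ≤ (‖T‖ * ‖T x‖ * ‖S x‖ + ‖⟪(T * S * T) x, x⟫_ℂ‖) / 2 := by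
          have : ‖S (T x)‖ * ‖S x‖ ≤ ‖T‖ * ‖T x‖ * ‖S x‖ :=
            mul_le_mul_of_nonneg_right hSTx hSx0
          linarith
    have step3 : ‖T‖ * ‖T x‖ * ‖S x‖ ≤ ‖T‖ * ((1/2) * ‖S * T + T * S‖) := by
      calc ‖T‖ * ‖T x‖ * ‖S x‖ = ‖T‖ * (‖T x‖ * ‖S x‖) := by ring
      _ ≤ ‖T‖ * ((1/2) * ‖S * T + T * S‖) := mul_le_mul_of_nonneg_left hAM hT0
    calc a ^ 3 ≤ (‖T‖ * ‖T x‖ * ‖S x‖ + ‖⟪(T * S * T) x, x⟫_ℂ‖) / 2 :=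
          le_trans step1 step2
    _ ≤ (‖T‖ * ((1/2) * ‖S * T + T * S‖) + numRadius (T * S * T)) / 2 := by
        linarith
    _ ≤ C := le_of_eq (by rw [hC]; ring)
  -- conclude via cube root
  set D : ℝ := C ^ ((3:ℝ)⁻¹) with hD
  have hD0 : 0 ≤ D := Real.rpow_nonneg hC0 _
  have hD3 : D ^ 3 = C := by
    rw [hD, ← Real.rpow_natCast (C ^ ((3:ℝ)⁻¹)) 3, ← Real.rpow_mul hC0]
    norm_num
  have hle : numRadius T ≤ D := by
    apply Real.sSup_le _ hD0
    rintro r ⟨x, hx, rfl⟩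
    have h3 : ‖⟪T x, x⟫_ℂ‖ ^ 3 ≤ D ^ 3 := by rw [hD3]; exact key x hx
    exact le_of_pow_le_pow_left₀ (by norm_num) hD0 h3
  calc (numRadius T) ^ 3 ≤ D ^ 3 :=
    pow_le_pow_left₀ (numRadius_nonneg T) hle 3
  _ = C := hD3
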